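/- Let X and Y be finite connected CW complexes, let f : Y → X be a homotopy equivalence, and let ω be a continuous closed 1-form on X. Then cat(X, ω) = cat(Y, f*ω), where f*ω is the pullback closed 1-form given by the cover {f⁻¹(U)}_{U ∈ 𝒰} and the functions f_U ∘ f. -/

import Mathlib

open Set

/-- A continuous closed 1-form on a topological space `X`: a collection of
continuous real-valued functions `f i : U i → ℝ` indexed by an open cover
`{U i}` of `X`, such that on overlaps the differences `f i − f j` are locally
constant.  (The functions are recorded as total functions `X → ℝ`; only their
restrictions to `U i` matter.) -/
structure ClosedOneForm (X : Type) [TopologicalSpace X] : Type 1 where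
  ι : Type
  U : ι → Set X
  isOpen : ∀ i, IsOpen (U i)
  covers : ∀ x : X, ∃ i, x ∈ U i
  f : ι → X → ℝ
  cont : ∀ i, ContinuousOn (f i) (U i)
  locConst : ∀ i j, ∀ x ∈ U i ∩ U j, ∃ W, IsOpen W ∧ x ∈ W ∧
    ∀ y ∈ W ∩ (U i ∩ U j), f i y - f j y = f i x - f j x

namespace ClosedOneForm

variable {X Y : Type} [TopologicalSpace X] [TopologicalSpace Y]

/-- `r` is a value of the line integral `∫_γ ω` of the closed 1-form `ω` over
the path `γ : [a,b] → X`: there is a partition `a = t₀ ≤ ⋯ ≤ t_n = b` with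
`γ([t_m, t_{m+1}]) ⊆ U (idx m)` and
`r = Σ_m (f (idx m) (γ t_{m+1}) − f (idx m) (γ t_m))`. -/
def IsPathIntegral (ω : ClosedOneForm X) (γ : ℝ → X) (a b r : ℝ) : Prop :=
  ∃ (n : ℕ) (t : ℕ → ℝ) (idx : ℕ → ω.ι),
    t 0 = a ∧ t n = b ∧ (∀ m < n, t m ≤ t (m + 1)) ∧
    (∀ m < n, ∀ s ∈ Set.Icc (t m) (t (m + 1)), γ s ∈ ω.U (idx m)) ∧
    r = ∑ m ∈ Finset.range n, (ω.f (idx m) (γ (t (m + 1))) - ω.f (idx m) (γ (t m)))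

open scoped Classical in
/-- The line integral `∫_γ ω` over `γ : [a,b] → X` (its value is independent
of all choices; it is defined, via choice, as the common value computed from
any admissible partition). -/
noncomputable def pathIntegral (ω : ClosedOneForm X) (γ : ℝ → X) (a b : ℝ) : ℝ :=
  if h : ∃ r, ω.IsPathIntegral γ a b r then h.choose else 0

/-- A subset `A ⊆ X` is `N`-movable with respect to `ω` if there is a homotopy
`H : A × [0,1] → X` with `H(a,0) = a` and `∫_{t ↦ H(a,t)} ω ≤ −N` for all `a ∈ A`. -/
def NMovable (ω : ClosedOneForm X) (A : Set X) (N : ℝ) : Prop :=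
  ∃ H : X × ℝ → X, ContinuousOn H (A ×ˢ Set.Icc (0 : ℝ) 1) ∧
    (∀ a ∈ A, H (a, 0) = a) ∧
    ∀ a ∈ A, ω.pathIntegral (fun t => H (a, t)) 0 1 ≤ -N

end ClosedOneForm

/-- The inclusion of `V` into `X` is null-homotopic. -/
def NullhomotopicIn (X : Type) [TopologicalSpace X] (V : Set X) : Prop :=
  ∃ (H : X × ℝ → X) (x₀ : X), ContinuousOn H (V ×ˢ Set.Icc (0 : ℝ) 1) ∧
    (∀ v ∈ V, H (v, 0) = v) ∧ (∀ v ∈ V, H (v, 1) = x₀)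

/-- `cat_X(A) ≤ k`: the subset `A` can be covered by `k` open subsets of `X`,
each null-homotopic in `X`. -/
def CatLE (X : Type) [TopologicalSpace X] (A : Set X) (k : ℕ) : Prop :=
  ∃ V : Fin k → Set X, (∀ i, IsOpen (V i)) ∧ A ⊆ ⋃ i, V i ∧
    ∀ i, NullhomotopicIn X (V i)

/-- `cat_X(A)`, the Lusternik–Schnirelmann category of `A` in `X`. -/
noncomputable def catSet (X : Type) [TopologicalSpace X] (A : Set X) : ℕ :=
  sInf {k | CatLE X A k}

/-- `cat(X)`, the Lusternik–Schnirelmann category of `X`. -/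
noncomputable def catSpace (X : Type) [TopologicalSpace X] : ℕ :=
  catSet X Set.univ

namespace ClosedOneForm

/-- `cat(X, ω)`: the minimal `k` such that for every `N > 0` there is a closed
subset `A ⊆ X`, `N`-movable with respect to `ω`, with `cat_X(X − A) ≤ k`. -/
noncomputable def catForm {X : Type} [TopologicalSpace X] (ω : ClosedOneForm X) : ℕ :=
  sInf {k | ∀ N : ℝ, 0 < N →
    ∃ A : Set X, IsClosed A ∧ ω.NMovable A N ∧ CatLE X Aᶜ k}

end ClosedOneForm

namespace ClosedOneForm

variable {X Y : Type} [TopologicalSpace X] [TopologicalSpace Y]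

/-- The pullback `φ*ω` of a closed 1-form along a continuous map `φ : Y → X`,
given by the cover `{φ⁻¹(U)}` and the functions `f_U ∘ φ`. -/
def pullback (ω : ClosedOneForm X) (φ : Y → X) (hφ : Continuous φ) :
    ClosedOneForm Y where
  ι := ω.ι
  U i := φ ⁻¹' ω.U i
  isOpen i := (ω.isOpen i).preimage hφ
  covers y := ω.covers (φ y)
  f i := ω.f i ∘ φ
  cont i := (ω.cont i).comp hφ.continuousOn (fun _ h => h)
  locConst := by
    intro i j y hy
    obtain ⟨W, hWo, hxW, hW⟩ := ω.locConst i j (φ y) hy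
    exact ⟨φ ⁻¹' W, hWo.preimage hφ, hxW, fun z hz => hW (φ z) hz⟩

/-- The sum `ω₁ + ω₂` of two closed 1-forms on `X`, given on the common
refinement of the two covers by the sums of the local functions. -/
def add (ω₁ ω₂ : ClosedOneForm X) : ClosedOneForm X where
  ι := ω₁.ι × ω₂.ι
  U p := ω₁.U p.1 ∩ ω₂.U p.2
  isOpen p := (ω₁.isOpen p.1).inter (ω₂.isOpen p.2)
  covers x := by
    obtain ⟨i, hi⟩ := ω₁.covers x
    obtain ⟨j, hj⟩ := ω₂.covers x
    exact ⟨(i, j), hi, hj⟩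
  f p x := ω₁.f p.1 x + ω₂.f p.2 x
  cont p := ((ω₁.cont p.1).mono Set.inter_subset_left).add
    ((ω₂.cont p.2).mono Set.inter_subset_right)
  locConst := by
    intro p q x hx
    obtain ⟨W₁, h1o, h1x, h1⟩ := ω₁.locConst p.1 q.1 x ⟨hx.1.1, hx.2.1⟩
    obtain ⟨W₂, h2o, h2x, h2⟩ := ω₂.locConst p.2 q.2 x ⟨hx.1.2, hx.2.2⟩
    refine ⟨W₁ ∩ W₂, h1o.inter h2o, ⟨h1x, h2x⟩, fun y hy => ?_⟩
    have e1 := h1 y ⟨hy.1.1, hy.2.1.1, hy.2.2.1⟩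
    have e2 := h2 y ⟨hy.1.2, hy.2.1.2, hy.2.2.2⟩
    try dsimp only at e1 e2 ⊢
    linarith

/-- The closed 1-form `ω + dg` obtained from `ω` by adding the differential of
a continuous function `g : X → ℝ`, i.e. adding `g|_U` to each local function. -/
def addFun (ω : ClosedOneForm X) (g : X → ℝ) (hg : Continuous g) :
    ClosedOneForm X where
  ι := ω.ι
  U := ω.U
  isOpen := ω.isOpen
  covers := ω.covers
  f i x := ω.f i x + g x
  cont i := (ω.cont i).add hg.continuousOn
  locConst := by
    intro i j x hx
    obtain ⟨W, hWo, hWx, hW⟩ := ω.locConst i j x hx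
    refine ⟨W, hWo, hWx, fun y hy => ?_⟩
    have := hW y hy
    try dsimp only at this ⊢
    linarith

end ClosedOneForm

/-- A finite CW structure on a (compact Hausdorff) topological space `X`:
finitely many cells, each given by a characteristic map from the closed unit
ball of a Euclidean space, continuous on the closed ball, injective on the
open ball, whose restriction to the boundary sphere lands in cells of strictly
lower dimension, and such that the images of the open balls partition `X`. -/
structure FinCW (X : Type) [TopologicalSpace X] where
  /-- number of cells -/
  n : ℕ
  /-- dimension of each cell -/
  dim : Fin n → ℕ
  /-- characteristic map of each cell -/
  φ : (i : Fin n) → EuclideanSpace ℝ (Fin (dim i)) → X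
  cont : ∀ i, ContinuousOn (φ i) (Metric.closedBall 0 1)
  injOn : ∀ i, Set.InjOn (φ i) (Metric.ball 0 1)
  sphere_lt : ∀ i, ∀ x ∈ Metric.sphere (0 : EuclideanSpace ℝ (Fin (dim i))) 1,
    ∃ j, dim j < dim i ∧ φ i x ∈ φ j '' Metric.ball 0 1
  partition : ∀ x : X, ∃! p : (i : Fin n) × EuclideanSpace ℝ (Fin (dim i)),
    p.2 ∈ Metric.ball 0 1 ∧ φ p.1 p.2 = x

/-- The Euler characteristic `χ(X) = Σ_i (−1)^i c_i` of a finite CW structure,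
where `c_i` is the number of cells of dimension `i`. -/
def FinCW.euler {X : Type} [TopologicalSpace X] (c : FinCW X) : ℤ :=
  ∑ i : Fin c.n, (-1 : ℤ) ^ (c.dim i)

/-!
The integral of `ω` along a path is computed chart by chart on a partition of `[0, 1]`. Two
partitions give the same value because they can be compared on the overlaps of their pieces, where
the charts differ by constants. The integral is additive under concatenation, and the integrals
over the four sides of a map from a square cancel, since the square can be cut into cells each
landing in one chart. For the square swept by a homotopy `φ ≃ id` of a compact space, this shows
that `∫_{φ ∘ γ} ω - ∫_γ ω` is bounded independently of `γ`.

If `f ∘ g ≃ id_X`, move `x ∈ X` along the homotopy to `f (g x)` and then by `f` composed with a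
homotopy of `g x` in `Y`. This turns null-homotopies of `V ⊆ Y` into null-homotopies of `g⁻¹ V`,
and `(N + C)`-movability of `B` for `f*ω` into `N`-movability of `g⁻¹ B` for `ω`, where `C` bounds
the integrals over the first leg. So `cat(X, ω) ≤ cat(Y, f*ω)`; exchanging `f` and `g`,
`cat(Y, f*ω) ≤ cat(X, (f ∘ g)*ω) ≤ cat(X, ω)`, the last step by the bound above.
-/

open scoped Topology

theorem le_of_forall_le_succ {t : ℕ → ℝ} {n : ℕ} (ht : ∀ m < n, t m ≤ t (m + 1)) {p q : ℕ}
    (hpq : p ≤ q) (hq : q ≤ n) : t p ≤ t q := by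
  induction q, hpq using Nat.le_induction with
  | base => rfl
  | succ q _ ih => exact (ih (by omega)).trans (ht q (by omega))

theorem mem_Icc_of_partition {t : ℕ → ℝ} {n : ℕ} {a b : ℝ} (ht0 : t 0 = a) (htn : t n = b)
    (ht : ∀ m < n, t m ≤ t (m + 1)) {m : ℕ} (hm : m ≤ n) : t m ∈ Icc a b :=
  ⟨ht0 ▸ le_of_forall_le_succ ht m.zero_le hm, htn ▸ le_of_forall_le_succ ht hm le_rfl⟩

theorem sum_range_sub_clamp {u : ℕ → ℝ} {n : ℕ} {p q : ℝ} (F : ℝ → ℝ) (hpq : p ≤ q)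
    (hu0 : u 0 ≤ p) (hun : q ≤ u n) :
    ∑ l ∈ Finset.range n, (F (max p (min q (u (l + 1)))) - F (max p (min q (u l)))) =
      F q - F p := by
  rw [Finset.sum_range_sub (fun l => F (max p (min q (u l)))), min_eq_left hun,
    max_eq_right hpq, min_eq_right (hu0.trans hpq), max_eq_left hu0]

theorem sum_boundary_eq_of_forall_cell {n : ℕ} {E V : ℕ → ℕ → ℝ}
    (h : ∀ p < n, ∀ q < n, E p q + V (p + 1) q = V p q + E p (q + 1)) :
    ∑ p ∈ Finset.range n, E p 0 + ∑ q ∈ Finset.range n, V n q =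
      ∑ q ∈ Finset.range n, V 0 q + ∑ p ∈ Finset.range n, E p n := by
  have : ∑ p ∈ Finset.range n, (E p 0 - E p n) = ∑ q ∈ Finset.range n, (V 0 q - V n q) :=
    calc _ = ∑ p ∈ Finset.range n, ∑ q ∈ Finset.range n, (E p q - E p (q + 1)) :=
          Finset.sum_congr rfl fun p _ => (Finset.sum_range_sub' _ _).symm
      _ = ∑ p ∈ Finset.range n, ∑ q ∈ Finset.range n, (V p q - V (p + 1) q) := by
          refine Finset.sum_congr rfl fun p hp => Finset.sum_congr rfl fun q hq => ?_
          linarith [h p (Finset.mem_range.1 hp) q (Finset.mem_range.1 hq)]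
      _ = _ := by
          rw [Finset.sum_comm]
          exact Finset.sum_congr rfl fun q _ => Finset.sum_range_sub' _ _
  rw [Finset.sum_sub_distrib, Finset.sum_sub_distrib] at this
  linarith

theorem exists_nat_forall_dist_lt {δ : ℝ} (hδ : 0 < δ) :
    ∃ n : ℕ, 0 < n ∧ ∀ m : ℕ, ∀ s ∈ Icc ((m : ℝ) / n) ((m + 1 : ℕ) / n), dist s (m / n) < δ := by
  obtain ⟨n, hn⟩ := exists_nat_one_div_lt hδ
  refine ⟨n + 1, n.succ_pos, fun m s hs => ?_⟩
  refine (Real.dist_le_of_mem_Icc hs (left_mem_Icc.2 (hs.1.trans hs.2))).trans_lt ?_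
  convert hn using 1
  push_cast
  ring

theorem div_mem_Icc_zero_one {n m : ℕ} (hm : m ≤ n) : (m : ℝ) / n ∈ Icc 0 1 :=
  ⟨by positivity, div_le_one_of_le₀ (by exact_mod_cast hm) (by positivity)⟩

theorem Icc_div_subset_Icc_zero_one {n m : ℕ} (hm : m < n) :
    Icc ((m : ℝ) / n) ((m + 1 : ℕ) / n) ⊆ Icc 0 1 :=
  Icc_subset_Icc (div_mem_Icc_zero_one hm.le).1 (div_mem_Icc_zero_one hm).2

theorem div_le_succ_div (n m : ℕ) : (m : ℝ) / n ≤ (m + 1 : ℕ) / n := by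
  gcongr; omega

noncomputable def pathConcat {E : Type} (γ₁ γ₂ : ℝ → E) (s : ℝ) : E :=
  if s ≤ 1 / 2 then γ₁ (2 * s) else γ₂ (2 * s - 1)

theorem pathConcat_zero {E : Type} (γ₁ γ₂ : ℝ → E) : pathConcat γ₁ γ₂ 0 = γ₁ 0 := by
  norm_num [pathConcat]

theorem pathConcat_one {E : Type} (γ₁ γ₂ : ℝ → E) : pathConcat γ₁ γ₂ 1 = γ₂ 1 := by
  norm_num [pathConcat]

section PathConcat

variable {Z E : Type} [TopologicalSpace Z] [TopologicalSpace E]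

theorem continuousOn_pathConcat {A : Set Z} {H₁ H₂ : Z × ℝ → E}
    (h₁ : ContinuousOn H₁ (A ×ˢ Icc 0 1)) (h₂ : ContinuousOn H₂ (A ×ˢ Icc 0 1))
    (hj : ∀ z ∈ A, H₁ (z, 1) = H₂ (z, 0)) :
    ContinuousOn (fun p : Z × ℝ => pathConcat (fun t => H₁ (p.1, t)) (fun t => H₂ (p.1, t)) p.2)
      (A ×ˢ Icc 0 1) := by
  refine ContinuousOn.if (fun p hp => ?_) ?_ ?_
  · have : p.2 = 1 / 2 := frontier_le_subset_eq continuous_snd continuous_const hp.2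
    norm_num [this, hj p.1 hp.1.1]
  · rw [(isClosed_le continuous_snd continuous_const).closure_eq]
    refine h₁.comp (by fun_prop) fun p hp => ⟨hp.1.1, ?_, ?_⟩
    · linarith [hp.1.2.1]
    · linarith [show p.2 ≤ 1 / 2 from hp.2]
  · have : closure {p : Z × ℝ | ¬p.2 ≤ 1 / 2} ⊆ {p | 1 / 2 ≤ p.2} :=
      closure_minimal (fun p hp => (not_le.1 hp).le) (isClosed_le continuous_const continuous_snd)
    refine h₂.comp (by fun_prop) fun p hp => ⟨hp.1.1, ?_, ?_⟩
    · linarith [show 1 / 2 ≤ p.2 from this hp.2]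
    · linarith [hp.1.2.2]

theorem ContinuousOn.pathConcat {γ₁ γ₂ : ℝ → E} (h₁ : ContinuousOn γ₁ (Icc 0 1))
    (h₂ : ContinuousOn γ₂ (Icc 0 1)) (hj : γ₁ 1 = γ₂ 0) :
    ContinuousOn (pathConcat γ₁ γ₂) (Icc 0 1) := by
  have h := continuousOn_pathConcat (A := (univ : Set Unit)) (H₁ := fun p => γ₁ p.2)
    (H₂ := fun p => γ₂ p.2) (h₁.comp continuousOn_snd fun _ hp => hp.2)
    (h₂.comp continuousOn_snd fun _ hp => hp.2) fun _ _ => hj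
  exact h.comp (f := fun s => ((), s)) (by fun_prop) fun _ hs => ⟨trivial, hs⟩

end PathConcat

section HomotopyMap

variable {X Y : Type} [TopologicalSpace X] [TopologicalSpace Y] {f₀ f₁ : C(X, Y)}

noncomputable def homotopyMap (F : f₀.Homotopy f₁) (p : X × ℝ) : Y :=
  F.extend p.2 p.1

theorem continuous_homotopyMap (F : f₀.Homotopy f₁) : Continuous (homotopyMap F) :=
  F.continuous.comp ((continuous_projIcc.comp continuous_snd).prodMk continuous_fst)

theorem homotopyMap_zero (F : f₀.Homotopy f₁) (x : X) : homotopyMap F (x, 0) = f₀ x :=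
  F.extend_apply_of_le_zero le_rfl x

theorem homotopyMap_one (F : f₀.Homotopy f₁) (x : X) : homotopyMap F (x, 1) = f₁ x :=
  F.extend_apply_of_one_le le_rfl x

end HomotopyMap

namespace ClosedOneForm

section PathIntegral

variable {X : Type} [TopologicalSpace X] {ω : ClosedOneForm X} {γ : ℝ → X} {a b r r' : ℝ}

theorem sub_eq_sub_of_isPreconnected {i j : ω.ι} {S : Set X} (hS : IsPreconnected S)
    (hSU : S ⊆ ω.U i ∩ ω.U j) {x y : X} (hx : x ∈ S) (hy : y ∈ S) :
    ω.f i x - ω.f j x = ω.f i y - ω.f j y := by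
  refine hS.induction₂ (fun x y => ω.f i x - ω.f j x = ω.f i y - ω.f j y) (fun z hz => ?_)
    (fun _ _ _ _ _ _ h h' => h.trans h') (fun _ _ _ _ h => h.symm) hx hy
  obtain ⟨W, hWo, hzW, hW⟩ := ω.locConst i j z (hSU hz)
  filter_upwards [mem_nhdsWithin_of_mem_nhds (hWo.mem_nhds hzW), self_mem_nhdsWithin]
    with y hyW hyS
  exact (hW y ⟨hyW, hSU hyS⟩).symm

/-- Both sides are the increment of `ω` along `γ` over the overlap of `[t₀, t₁]` and `[u₀, u₁]`
(zero if they are disjoint), computed in the chart `i` and in the chart `j` respectively. -/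
theorem sub_clamp_eq_sub_clamp {t₀ t₁ u₀ u₁ : ℝ} {i j : ω.ι} (ht : t₀ ≤ t₁) (hu : u₀ ≤ u₁)
    (hγ : ContinuousOn γ (Icc t₀ t₁)) (hi : ∀ s ∈ Icc t₀ t₁, γ s ∈ ω.U i)
    (hj : ∀ s ∈ Icc u₀ u₁, γ s ∈ ω.U j) :
    ω.f i (γ (max t₀ (min t₁ u₁))) - ω.f i (γ (max t₀ (min t₁ u₀))) =
      ω.f j (γ (max u₀ (min u₁ t₁))) - ω.f j (γ (max u₀ (min u₁ t₀))) := by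
  rcases lt_or_ge u₁ t₀ with h | h
  · rw [show max t₀ (min t₁ u₁) = max t₀ (min t₁ u₀) by grind,
      show max u₀ (min u₁ t₁) = max u₀ (min u₁ t₀) by grind, sub_self, sub_self]
  rcases lt_or_ge t₁ u₀ with h' | h'
  · rw [show max t₀ (min t₁ u₁) = max t₀ (min t₁ u₀) by grind,
      show max u₀ (min u₁ t₁) = max u₀ (min u₁ t₀) by grind, sub_self, sub_self]
  rw [show max u₀ (min u₁ t₁) = max t₀ (min t₁ u₁) by grind,
    show max u₀ (min u₁ t₀) = max t₀ (min t₁ u₀) by grind]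
  have hLR : Icc (max t₀ (min t₁ u₀)) (max t₀ (min t₁ u₁)) ⊆ Icc t₀ t₁ ∩ Icc u₀ u₁ := by
    intro s hs
    simp only [mem_Icc, mem_inter_iff] at hs ⊢
    grind
  have := sub_eq_sub_of_isPreconnected (i := i) (j := j)
    (isPreconnected_Icc.image γ (hγ.mono (hLR.trans inter_subset_left)))
    (image_subset_iff.2 fun s hs => ⟨hi s (hLR hs).1, hj s (hLR hs).2⟩)
    (mem_image_of_mem γ (right_mem_Icc.2 (by grind)))
    (mem_image_of_mem γ (left_mem_Icc.2 (by grind)))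
  linarith

/-- Both sums equal the double sum, over pairs of pieces of the two partitions, of the increments
over their overlaps. -/
theorem IsPathIntegral.unique (hγ : ContinuousOn γ (Icc a b)) (h : ω.IsPathIntegral γ a b r)
    (h' : ω.IsPathIntegral γ a b r') : r = r' := by
  obtain ⟨n, t, idx, ht0, htn, ht, htU, rfl⟩ := h
  obtain ⟨n', u, jdx, hu0, hun, hu, huU, rfl⟩ := h'
  have htab := fun m (hm : m ≤ n) => mem_Icc_of_partition ht0 htn ht hm
  have huab := fun l (hl : l ≤ n') => mem_Icc_of_partition hu0 hun hu hl
  calc _ = ∑ m ∈ Finset.range n, ∑ l ∈ Finset.range n',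
          (ω.f (idx m) (γ (max (t m) (min (t (m + 1)) (u (l + 1))))) -
            ω.f (idx m) (γ (max (t m) (min (t (m + 1)) (u l))))) := by
        refine Finset.sum_congr rfl fun m hm =>
          (sum_range_sub_clamp (fun x => ω.f (idx m) (γ x)) (ht m ?_) ?_ ?_).symm
        all_goals grind
    _ = ∑ m ∈ Finset.range n, ∑ l ∈ Finset.range n',
          (ω.f (jdx l) (γ (max (u l) (min (u (l + 1)) (t (m + 1))))) -
            ω.f (jdx l) (γ (max (u l) (min (u (l + 1)) (t m))))) := by
        refine Finset.sum_congr rfl fun m hm => Finset.sum_congr rfl fun l hl => ?_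
        rw [Finset.mem_range] at hm hl
        exact sub_clamp_eq_sub_clamp (ht m hm) (hu l hl)
          (hγ.mono (Icc_subset_Icc (htab m hm.le).1 (htab _ hm).2)) (htU m hm) (huU l hl)
    _ = _ := by
        rw [Finset.sum_comm]
        refine Finset.sum_congr rfl fun l hl =>
          sum_range_sub_clamp (fun x => ω.f (jdx l) (γ x)) (hu l ?_) ?_ ?_
        all_goals grind

theorem pathIntegral_eq (hγ : ContinuousOn γ (Icc a b)) (h : ω.IsPathIntegral γ a b r) :
    ω.pathIntegral γ a b = r := by
  have hex : ∃ r, ω.IsPathIntegral γ a b r := ⟨r, h⟩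
  rw [pathIntegral, dif_pos hex]
  exact hex.choose_spec.unique hγ h

theorem isPathIntegral_of_mapsTo {i : ω.ι} (hab : a ≤ b) (hU : ∀ s ∈ Icc a b, γ s ∈ ω.U i) :
    ω.IsPathIntegral γ a b (ω.f i (γ b) - ω.f i (γ a)) :=
  ⟨1, fun m => if m = 0 then a else b, fun _ => i, rfl, rfl, by simpa using hab,
    by simpa using hU, by simp⟩

theorem pathIntegral_of_mapsTo {i : ω.ι} (hab : a ≤ b) (hγ : ContinuousOn γ (Icc a b))
    (hU : ∀ s ∈ Icc a b, γ s ∈ ω.U i) : ω.pathIntegral γ a b = ω.f i (γ b) - ω.f i (γ a) :=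
  pathIntegral_eq hγ (isPathIntegral_of_mapsTo hab hU)

theorem pathIntegral_eq_sum (hγ : ContinuousOn γ (Icc a b)) {n : ℕ} {t : ℕ → ℝ}
    {idx : ℕ → ω.ι} (ht0 : t 0 = a) (htn : t n = b) (ht : ∀ m < n, t m ≤ t (m + 1))
    (htU : ∀ m < n, ∀ s ∈ Icc (t m) (t (m + 1)), γ s ∈ ω.U (idx m)) :
    ω.pathIntegral γ a b = ∑ m ∈ Finset.range n, ω.pathIntegral γ (t m) (t (m + 1)) := by
  rw [pathIntegral_eq hγ ⟨n, t, idx, ht0, htn, ht, htU, rfl⟩]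
  refine Finset.sum_congr rfl fun m hm => ?_
  rw [Finset.mem_range] at hm
  refine (pathIntegral_of_mapsTo (ht m hm) (hγ.mono (Icc_subset_Icc ?_ ?_)) (htU m hm)).symm
  exacts [(mem_Icc_of_partition ht0 htn ht hm.le).1, (mem_Icc_of_partition ht0 htn ht hm).2]

theorem pathIntegral_eq_sum_grid (hγ : ContinuousOn γ (Icc 0 1)) {n : ℕ} (hn : 0 < n)
    {I : ℕ → ω.ι} (hI : ∀ m < n, ∀ s ∈ Icc ((m : ℝ) / n) ((m + 1 : ℕ) / n), γ s ∈ ω.U (I m)) :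
    ω.pathIntegral γ 0 1 =
      ∑ m ∈ Finset.range n, ω.pathIntegral γ ((m : ℝ) / n) ((m + 1 : ℕ) / n) :=
  pathIntegral_eq_sum hγ (t := fun m => (m : ℝ) / n) (by simp) (div_self (by positivity))
    (fun m _ => div_le_succ_div n m) hI

theorem pathIntegral_rectangle_of_mapsTo {h : ℝ × ℝ → X} {i : ω.ι} {x₀ x₁ y₀ y₁ : ℝ}
    (hx : x₀ ≤ x₁) (hy : y₀ ≤ y₁) (hh : ContinuousOn h (Icc x₀ x₁ ×ˢ Icc y₀ y₁))
    (hU : ∀ x ∈ Icc x₀ x₁, ∀ y ∈ Icc y₀ y₁, h (x, y) ∈ ω.U i) :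
    ω.pathIntegral (fun s => h (s, y₀)) x₀ x₁ + ω.pathIntegral (fun s => h (x₁, s)) y₀ y₁ =
      ω.pathIntegral (fun s => h (x₀, s)) y₀ y₁ + ω.pathIntegral (fun s => h (s, y₁)) x₀ x₁ := by
  have hrow : ∀ y ∈ Icc y₀ y₁, ContinuousOn (fun s => h (s, y)) (Icc x₀ x₁) :=
    fun y hy => hh.uncurry_right (f := Function.curry h) y hy
  have hcol : ∀ x ∈ Icc x₀ x₁, ContinuousOn (fun s => h (x, s)) (Icc y₀ y₁) :=
    fun x hx => hh.uncurry_left (f := Function.curry h) x hx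
  have hx₀ := left_mem_Icc.2 hx
  have hx₁ := right_mem_Icc.2 hx
  have hy₀ := left_mem_Icc.2 hy
  have hy₁ := right_mem_Icc.2 hy
  rw [pathIntegral_of_mapsTo hx (hrow y₀ hy₀) fun s hs => hU s hs y₀ hy₀,
    pathIntegral_of_mapsTo hx (hrow y₁ hy₁) fun s hs => hU s hs y₁ hy₁,
    pathIntegral_of_mapsTo hy (hcol x₀ hx₀) fun s hs => hU x₀ hx₀ s hs,
    pathIntegral_of_mapsTo hy (hcol x₁ hx₁) fun s hs => hU x₁ hx₁ s hs]
  ring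

theorem IsPathIntegral.append {c : ℝ} (h : ω.IsPathIntegral γ a b r)
    (h' : ω.IsPathIntegral γ b c r') : ω.IsPathIntegral γ a c (r + r') := by
  classical
  obtain ⟨n, t, idx, ht0, htn, ht, htU, rfl⟩ := h
  obtain ⟨n', u, jdx, hu0, hun, hu, huU, rfl⟩ := h'
  set T : ℕ → ℝ := fun m => if m ≤ n then t m else u (m - n)
  set I : ℕ → ω.ι := fun m => if m < n then idx m else jdx (m - n)
  have hTl : ∀ m ≤ n, T m = t m := fun m hm => if_pos hm
  have hTr : ∀ m, n ≤ m → T m = u (m - n) := by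
    intro m hm
    rcases hm.eq_or_lt with rfl | hm
    · simp [T, htn, hu0]
    · exact if_neg (by omega)
  have hIl : ∀ m < n, I m = idx m := fun m hm => if_pos hm
  have hIr : ∀ m, n ≤ m → I m = jdx (m - n) := fun m hm => if_neg (by omega)
  refine ⟨n + n', T, I, by simp [T, ht0], ?_, fun m hm => ?_, fun m hm => ?_, ?_⟩
  · rw [hTr _ (by omega), Nat.add_sub_cancel_left, hun]
  · rcases lt_or_ge m n with hmn | hmn
    · rw [hTl m hmn.le, hTl (m + 1) hmn]
      exact ht m hmn
    · rw [hTr m hmn, hTr (m + 1) (by omega), show m + 1 - n = m - n + 1 by omega]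
      exact hu _ (by omega)
  · rcases lt_or_ge m n with hmn | hmn
    · rw [hTl m hmn.le, hTl (m + 1) hmn, hIl m hmn]
      exact htU m hmn
    · rw [hTr m hmn, hTr (m + 1) (by omega), show m + 1 - n = m - n + 1 by omega, hIr m hmn]
      exact huU _ (by omega)
  · rw [Finset.sum_range_add]
    congr 1 <;> refine Finset.sum_congr rfl fun m hm => ?_ <;> rw [Finset.mem_range] at hm
    · rw [hTl m hm.le, hTl (m + 1) hm, hIl m hm]
    · rw [hTr _ (by omega), hTr _ (by omega), hIr _ (by omega),
        show n + m + 1 - n = m + 1 by omega, Nat.add_sub_cancel_left]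

theorem IsPathIntegral.comp_affine {γ' : ℝ → X} {c d a' b' : ℝ} (hc : 0 < c)
    (ha' : c * a + d = a') (hb' : c * b + d = b') (hγ' : ∀ s ∈ Icc a b, γ' (c * s + d) = γ s)
    (h : ω.IsPathIntegral γ a b r) : ω.IsPathIntegral γ' a' b' r := by
  obtain ⟨n, t, idx, ht0, htn, ht, htU, rfl⟩ := h
  have htab := fun m (hm : m ≤ n) => mem_Icc_of_partition ht0 htn ht hm
  refine ⟨n, fun m => c * t m + d, idx, by simp only [ht0, ha'], by simp only [htn, hb'],
    fun m hm => by simp only; gcongr; exact ht m hm, fun m hm s hs => ?_, ?_⟩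
  · have hs' : (s - d) / c ∈ Icc (t m) (t (m + 1)) := by
      constructor <;> [rw [le_div_iff₀ hc]; rw [div_le_iff₀ hc]] <;> linarith [hs.1, hs.2]
    have hsab : (s - d) / c ∈ Icc a b := ⟨(htab m hm.le).1.trans hs'.1, hs'.2.trans (htab _ hm).2⟩
    rw [show s = c * ((s - d) / c) + d by field_simp; ring, hγ' _ hsab]
    exact htU m hm _ hs'
  · refine Finset.sum_congr rfl fun m hm => ?_
    rw [Finset.mem_range] at hm
    rw [hγ' _ (htab m hm.le), hγ' _ (htab _ hm)]

variable (ω)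

theorem exists_lebesgue_number {M : Type} [PseudoMetricSpace M] {K : Set M} (hK : IsCompact K)
    {h : M → X} (hh : ContinuousOn h K) :
    ∃ δ > 0, ∀ z ∈ K, ∃ i, ∀ w ∈ K, dist w z < δ → h w ∈ ω.U i := by
  choose V hVo hV using fun i => continuousOn_iff'.1 hh _ (ω.isOpen i)
  have hcover : K ⊆ ⋃ i, V i := by
    intro z hz
    obtain ⟨i, hi⟩ := ω.covers (h z)
    have : z ∈ V i ∩ K := by rw [← hV]; exact ⟨hi, hz⟩
    exact mem_iUnion.2 ⟨i, this.1⟩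
  obtain ⟨δ, hδ, hball⟩ := lebesgue_number_lemma_of_metric hK hVo hcover
  refine ⟨δ, hδ, fun z hz => ?_⟩
  obtain ⟨i, hi⟩ := hball z hz
  refine ⟨i, fun w hw hwz => ?_⟩
  have : w ∈ h ⁻¹' ω.U i ∩ K := by rw [hV]; exact ⟨hi hwz, hw⟩
  exact this.1

theorem exists_grid {h : ℝ × ℝ → X} (hh : ContinuousOn h (Icc 0 1 ×ˢ Icc 0 1)) :
    ∃ n : ℕ, 0 < n ∧ ∃ I : ℕ → ℕ → ω.ι, ∀ p < n, ∀ q < n,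
      ∀ x ∈ Icc ((p : ℝ) / n) ((p + 1 : ℕ) / n), ∀ y ∈ Icc ((q : ℝ) / n) ((q + 1 : ℕ) / n),
        h (x, y) ∈ ω.U (I p q) := by
  obtain ⟨δ, hδ, hU⟩ := ω.exists_lebesgue_number (isCompact_Icc.prod isCompact_Icc) hh
  obtain ⟨n, hn, hdist⟩ := exists_nat_forall_dist_lt hδ
  have : ∀ p q, ∃ i, p < n → q < n → ∀ x ∈ Icc ((p : ℝ) / n) ((p + 1 : ℕ) / n),
      ∀ y ∈ Icc ((q : ℝ) / n) ((q + 1 : ℕ) / n), h (x, y) ∈ ω.U i := by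
    intro p q
    by_cases hpq : p < n ∧ q < n
    · obtain ⟨i, hi⟩ := hU ((p : ℝ) / n, (q : ℝ) / n)
        ⟨div_mem_Icc_zero_one hpq.1.le, div_mem_Icc_zero_one hpq.2.le⟩
      refine ⟨i, fun _ _ x hx y hy => hi (x, y) ?_ ?_⟩
      · exact ⟨Icc_div_subset_Icc_zero_one hpq.1 hx, Icc_div_subset_Icc_zero_one hpq.2 hy⟩
      · rw [Prod.dist_eq]
        exact max_lt (hdist p x hx) (hdist q y hy)
    · exact ⟨(ω.covers (h 0)).choose, fun hp hq => absurd ⟨hp, hq⟩ hpq⟩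
  choose I hI using this
  exact ⟨n, hn, I, fun p hp q hq => hI p q hp hq⟩

theorem exists_isPathIntegral (hγ : ContinuousOn γ (Icc 0 1)) : ∃ r, ω.IsPathIntegral γ 0 1 r := by
  obtain ⟨n, hn, I, hI⟩ := ω.exists_grid (h := fun p => γ p.1)
    (hγ.comp continuousOn_fst fun _ hp => hp.1)
  exact ⟨_, n, fun m => (m : ℝ) / n, fun m => I m 0, by simp, div_self (by positivity),
    fun m _ => div_le_succ_div n m, fun m hm s hs => hI m hm 0 hn s hs 0 (by simp), rfl⟩

theorem pathIntegral_pathConcat {γ₁ γ₂ : ℝ → X} (h₁ : ContinuousOn γ₁ (Icc 0 1))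
    (h₂ : ContinuousOn γ₂ (Icc 0 1)) (hj : γ₁ 1 = γ₂ 0) :
    ω.pathIntegral (pathConcat γ₁ γ₂) 0 1 = ω.pathIntegral γ₁ 0 1 + ω.pathIntegral γ₂ 0 1 := by
  obtain ⟨r₁, hr₁⟩ := ω.exists_isPathIntegral h₁
  obtain ⟨r₂, hr₂⟩ := ω.exists_isPathIntegral h₂
  have hr₁' : ω.IsPathIntegral (pathConcat γ₁ γ₂) 0 (1 / 2) r₁ :=
    hr₁.comp_affine (c := 1 / 2) (d := 0) (by norm_num) (by norm_num) (by norm_num)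
      fun s hs => by rw [pathConcat, if_pos (by linarith [hs.2])]; congr 1; ring
  have hr₂' : ω.IsPathIntegral (pathConcat γ₁ γ₂) (1 / 2) 1 r₂ := by
    refine hr₂.comp_affine (c := 1 / 2) (d := 1 / 2) (by norm_num) (by norm_num) (by norm_num)
      fun s hs => ?_
    rcases hs.1.eq_or_lt with rfl | hs0
    · norm_num [pathConcat, hj]
    · rw [pathConcat, if_neg (by linarith)]; congr 1; ring
  rw [pathIntegral_eq h₁ hr₁, pathIntegral_eq h₂ hr₂]
  exact pathIntegral_eq (h₁.pathConcat h₂ hj) (hr₁'.append hr₂')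

/-- Cut the square into cells that each land in a single chart: the identity holds on every cell
by `pathIntegral_rectangle_of_mapsTo`, and the inner edges cancel. -/
theorem pathIntegral_square {h : ℝ × ℝ → X} (hh : ContinuousOn h (Icc 0 1 ×ˢ Icc 0 1)) :
    ω.pathIntegral (fun s => h (s, 0)) 0 1 + ω.pathIntegral (fun s => h (1, s)) 0 1 =
      ω.pathIntegral (fun s => h (0, s)) 0 1 + ω.pathIntegral (fun s => h (s, 1)) 0 1 := by
  obtain ⟨n, hn, I, hI⟩ := ω.exists_grid hh
  have h0 : (0 : ℝ) ∈ Icc ((0 : ℕ) / n : ℝ) ((0 + 1 : ℕ) / n) := by simp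
  have h1 : (1 : ℝ) ∈ Icc ((n - 1 : ℕ) / n : ℝ) ((n - 1 + 1 : ℕ) / n) := by
    rw [Nat.sub_add_cancel hn, div_self (by positivity)]
    exact ⟨div_le_one_of_le₀ (by exact_mod_cast n.sub_le 1) (by positivity), le_rfl⟩
  have hn1 : n - 1 < n := by omega
  have hrow : ∀ y ∈ Icc (0 : ℝ) 1, ContinuousOn (fun s => h (s, y)) (Icc 0 1) :=
    fun y hy => hh.uncurry_right (f := Function.curry h) y hy
  have hcol : ∀ x ∈ Icc (0 : ℝ) 1, ContinuousOn (fun s => h (x, s)) (Icc 0 1) :=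
    fun x hx => hh.uncurry_left (f := Function.curry h) x hx
  rw [pathIntegral_eq_sum_grid (hrow 0 (by simp)) hn fun p hp s hs => hI p hp 0 hn s hs 0 h0,
    pathIntegral_eq_sum_grid (hrow 1 (by simp)) hn fun p hp s hs => hI p hp _ hn1 s hs 1 h1,
    pathIntegral_eq_sum_grid (hcol 0 (by simp)) hn fun q hq s hs => hI 0 hn q hq 0 h0 s hs,
    pathIntegral_eq_sum_grid (hcol 1 (by simp)) hn fun q hq s hs => hI _ hn1 q hq 1 h1 s hs]
  have hcell := fun p (hp : p < n) q (hq : q < n) =>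
    pathIntegral_rectangle_of_mapsTo (div_le_succ_div n p) (div_le_succ_div n q)
      (hh.mono (prod_mono (Icc_div_subset_Icc_zero_one hp) (Icc_div_subset_Icc_zero_one hq)))
      (hI p hp q hq)
  simpa only [Nat.cast_zero, zero_div, div_self (show (n : ℝ) ≠ 0 by positivity)] using
    sum_boundary_eq_of_forall_cell
      (E := fun p q => ω.pathIntegral (fun s => h (s, (q : ℝ) / n)) (p / n) ((p + 1 : ℕ) / n))
      (V := fun p q => ω.pathIntegral (fun s => h ((p : ℝ) / n, s)) (q / n) ((q + 1 : ℕ) / n))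
      hcell

theorem continuous_pathIntegral {Z : Type} [TopologicalSpace Z] {Φ : Z × ℝ → X}
    (hΦ : Continuous Φ) : Continuous fun z => ω.pathIntegral (fun t => Φ (z, t)) 0 1 := by
  refine continuous_iff_continuousAt.2 fun z₀ => ?_
  have hslice : ∀ z, ContinuousOn (fun t => Φ (z, t)) (Icc 0 1) := fun z =>
    (hΦ.comp (Continuous.prodMk_right z)).continuousOn
  obtain ⟨r, n, t, idx, ht0, htn, ht, htU, -⟩ := ω.exists_isPathIntegral (hslice z₀)
  have hnear : ∀ᶠ z in 𝓝 z₀, ∀ m ∈ Finset.range n, ∀ s ∈ Icc (t m) (t (m + 1)),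
      Φ (z, s) ∈ ω.U (idx m) := by
    refine (Filter.eventually_all_finset _).2 fun m hm =>
      isCompact_Icc.eventually_forall_of_forall_eventually fun s hs => ?_
    exact hΦ.continuousAt.preimage_mem_nhds
      ((ω.isOpen _).mem_nhds (htU m (Finset.mem_range.1 hm) s hs))
  have hf : ∀ m < n, ∀ s ∈ Icc (t m) (t (m + 1)),
      ContinuousAt (fun z => ω.f (idx m) (Φ (z, s))) z₀ := fun m hm s hs =>
    ((ω.cont _).continuousAt ((ω.isOpen _).mem_nhds (htU m hm s hs))).comp
      (f := fun z => Φ (z, s)) (hΦ.comp (Continuous.prodMk_left s)).continuousAt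
  have hsum : ContinuousAt (fun z => ∑ m ∈ Finset.range n,
      (ω.f (idx m) (Φ (z, t (m + 1))) - ω.f (idx m) (Φ (z, t m)))) z₀ := by
    refine tendsto_finsetSum _ fun m hm => ?_
    rw [Finset.mem_range] at hm
    exact (hf m hm _ (right_mem_Icc.2 (ht m hm))).sub (hf m hm _ (left_mem_Icc.2 (ht m hm)))
  refine hsum.congr ?_
  filter_upwards [hnear] with z hz
  exact (pathIntegral_eq (hslice z)
    ⟨n, t, idx, ht0, htn, ht, fun m hm => hz m (Finset.mem_range.2 hm), rfl⟩).symm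

theorem exists_abs_pathIntegral_le {Z : Type} [TopologicalSpace Z] [CompactSpace Z]
    {Φ : Z × ℝ → X} (hΦ : Continuous Φ) :
    ∃ C, ∀ z, |ω.pathIntegral (fun t => Φ (z, t)) 0 1| ≤ C := by
  obtain ⟨C, hC⟩ := isCompact_univ.exists_bound_of_continuousOn
    (ω.continuous_pathIntegral hΦ).continuousOn
  exact ⟨C, fun z => hC z (mem_univ z)⟩

theorem pathIntegral_pullback {Y : Type} [TopologicalSpace Y] {φ : Y → X} (hφ : Continuous φ)
    (γ : ℝ → Y) (a b : ℝ) :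
    (ω.pullback φ hφ).pathIntegral γ a b = ω.pathIntegral (fun t => φ (γ t)) a b :=
  rfl

/-- The homotopy sweeps a square with bottom `φ ∘ γ`, top `γ`, and two tracks of the homotopy as
sides. -/
theorem exists_pathIntegral_pullback_le [CompactSpace X] {φ : C(X, X)}
    (F : φ.Homotopy (ContinuousMap.id X)) :
    ∃ C, ∀ γ : ℝ → X, ContinuousOn γ (Icc 0 1) →
      (ω.pullback φ φ.continuous).pathIntegral γ 0 1 ≤ ω.pathIntegral γ 0 1 + C := by
  obtain ⟨C, hC⟩ := ω.exists_abs_pathIntegral_le (continuous_homotopyMap F)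
  refine ⟨2 * C, fun γ hγ => ?_⟩
  have hsq := ω.pathIntegral_square (h := fun p => homotopyMap F (γ p.1, p.2))
    ((continuous_homotopyMap F).comp_continuousOn
      ((hγ.comp continuousOn_fst fun _ hp => hp.1).prodMk continuousOn_snd))
  simp only [homotopyMap_zero, homotopyMap_one, ContinuousMap.id_apply] at hsq
  rw [pathIntegral_pullback]
  linarith [abs_le.1 (hC (γ 0)), abs_le.1 (hC (γ 1))]

end PathIntegral

section CatForm

variable {X Y : Type} [TopologicalSpace X] [TopologicalSpace Y]

def CatFormLE (ω : ClosedOneForm X) (k : ℕ) : Prop :=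
  ∀ N : ℝ, 0 < N → ∃ A : Set X, IsClosed A ∧ ω.NMovable A N ∧ CatLE X Aᶜ k

theorem catForm_eq_sInf (ω : ClosedOneForm X) : ω.catForm = sInf {k | ω.CatFormLE k} :=
  rfl

theorem NMovable.mono {ω : ClosedOneForm X} {A : Set X} {N N' : ℝ} (h : ω.NMovable A N')
    (hN : N ≤ N') : ω.NMovable A N := by
  obtain ⟨H, hH, hH0, hHint⟩ := h
  exact ⟨H, hH, hH0, fun a ha => (hHint a ha).trans (neg_le_neg hN)⟩

theorem NMovable.of_pathIntegral_le {ω ω' : ClosedOneForm X} {A : Set X} {N C : ℝ}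
    (hC : ∀ γ : ℝ → X, ContinuousOn γ (Icc 0 1) →
      ω'.pathIntegral γ 0 1 ≤ ω.pathIntegral γ 0 1 + C)
    (h : ω.NMovable A N) : ω'.NMovable A (N - C) := by
  obtain ⟨H, hH, hH0, hHint⟩ := h
  refine ⟨H, hH, hH0, fun a ha => ?_⟩
  linarith [hC (fun t => H (a, t)) (hH.uncurry_left (f := Function.curry H) a ha), hHint a ha]

theorem CatFormLE.of_transfer {ω : ClosedOneForm Y} {ω' : ClosedOneForm X} {k : ℕ}
    (T : Set Y → Set X) (C : ℝ) (hclosed : ∀ B, IsClosed B → IsClosed (T B))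
    (hmov : ∀ B N, ω.NMovable B N → ω'.NMovable (T B) (N - C))
    (hcat : ∀ B, CatLE Y Bᶜ k → CatLE X (T B)ᶜ k) (h : ω.CatFormLE k) : ω'.CatFormLE k := by
  intro N hN
  obtain ⟨B, hBc, hBmov, hBcat⟩ := h (N + |C|) (add_pos_of_pos_of_nonneg hN (abs_nonneg C))
  exact ⟨T B, hclosed B hBc, (hmov B _ hBmov).mono (by linarith [le_abs_self C]), hcat B hBcat⟩

theorem CatFormLE.pullback_of_homotopy [CompactSpace X] {ω : ClosedOneForm X} {φ : C(X, X)}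
    (F : φ.Homotopy (ContinuousMap.id X)) {k : ℕ} (h : ω.CatFormLE k) :
    (ω.pullback φ φ.continuous).CatFormLE k := by
  obtain ⟨C, hC⟩ := ω.exists_pathIntegral_pullback_le F
  exact h.of_transfer id C (fun _ hB => hB) (fun _ _ hB => hB.of_pathIntegral_le hC)
    fun _ hB => hB

section Transfer

variable {f : C(Y, X)} {g : C(X, Y)}

noncomputable def transferHomotopy (F : (f.comp g).Homotopy (ContinuousMap.id X))
    (K : Y × ℝ → Y) (p : X × ℝ) : X :=
  pathConcat (fun t => homotopyMap F.symm (p.1, t)) (fun t => f (K (g p.1, t))) p.2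

section

variable (F : (f.comp g).Homotopy (ContinuousMap.id X)) {B : Set Y} {K : Y × ℝ → Y}

theorem transferHomotopy_zero (x : X) : transferHomotopy F K (x, 0) = x := by
  rw [transferHomotopy, pathConcat_zero, homotopyMap_zero]
  rfl

theorem transferHomotopy_one (x : X) : transferHomotopy F K (x, 1) = f (K (g x, 1)) := by
  rw [transferHomotopy, pathConcat_one]

theorem continuousOn_transferHomotopy (hK : ContinuousOn K (B ×ˢ Icc 0 1))
    (hK0 : ∀ y ∈ B, K (y, 0) = y) :
    ContinuousOn (transferHomotopy F K) ((g ⁻¹' B) ×ˢ Icc 0 1) :=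
  continuousOn_pathConcat (H₂ := fun p => f (K (g p.1, p.2)))
    (continuous_homotopyMap F.symm).continuousOn
    (f.continuous.comp_continuousOn
      (hK.comp (f := fun p : X × ℝ => (g p.1, p.2)) (by fun_prop) fun _ hp => ⟨hp.1, hp.2⟩))
    fun x hx => by rw [homotopyMap_one, hK0 _ hx]; rfl

theorem pathIntegral_transferHomotopy (ω : ClosedOneForm X) (hK : ContinuousOn K (B ×ˢ Icc 0 1))
    (hK0 : ∀ y ∈ B, K (y, 0) = y) {x : X} (hx : g x ∈ B) :
    ω.pathIntegral (fun t => transferHomotopy F K (x, t)) 0 1 =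
      ω.pathIntegral (fun t => homotopyMap F.symm (x, t)) 0 1 +
        (ω.pullback f f.continuous).pathIntegral (fun t => K (g x, t)) 0 1 :=
  ω.pathIntegral_pathConcat (γ₁ := fun t => homotopyMap F.symm (x, t))
    (γ₂ := fun t => f (K (g x, t)))
    ((continuous_homotopyMap F.symm).comp (Continuous.prodMk_right x)).continuousOn
    (f.continuous.comp_continuousOn (hK.uncurry_left (f := Function.curry K) (g x) hx))
    (by simp only [homotopyMap_one, hK0 _ hx]; rfl)

end

theorem _root_.NullhomotopicIn.preimage (F : (f.comp g).Homotopy (ContinuousMap.id X))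
    {V : Set Y} (hV : NullhomotopicIn Y V) : NullhomotopicIn X (g ⁻¹' V) := by
  obtain ⟨K, y₀, hK, hK0, hK1⟩ := hV
  exact ⟨transferHomotopy F K, f y₀, continuousOn_transferHomotopy F hK hK0,
    fun x _ => transferHomotopy_zero F x, fun x hx => by rw [transferHomotopy_one, hK1 _ hx]⟩

theorem _root_.CatLE.preimage (F : (f.comp g).Homotopy (ContinuousMap.id X)) {S : Set Y}
    {k : ℕ} (h : CatLE Y S k) : CatLE X (g ⁻¹' S) k := by
  obtain ⟨V, hVo, hSV, hV⟩ := h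
  exact ⟨fun i => g ⁻¹' V i, fun i => (hVo i).preimage g.continuous,
    fun x hx => by simpa using hSV hx, fun i => (hV i).preimage F⟩

theorem exists_nMovable_preimage [CompactSpace X] (F : (f.comp g).Homotopy (ContinuousMap.id X))
    (ω : ClosedOneForm X) :
    ∃ C, ∀ B N, (ω.pullback f f.continuous).NMovable B N → ω.NMovable (g ⁻¹' B) (N - C) := by
  obtain ⟨C, hC⟩ := ω.exists_abs_pathIntegral_le (continuous_homotopyMap F.symm)
  refine ⟨C, fun B N ⟨K, hK, hK0, hKint⟩ => ⟨transferHomotopy F K,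
    continuousOn_transferHomotopy F hK hK0, fun x _ => transferHomotopy_zero F x, fun x hx => ?_⟩⟩
  rw [pathIntegral_transferHomotopy F ω hK hK0 hx]
  linarith [(abs_le.1 (hC x)).2, hKint (g x) hx]

theorem CatFormLE.of_pullback [CompactSpace X] (F : (f.comp g).Homotopy (ContinuousMap.id X))
    {ω : ClosedOneForm X} {k : ℕ} (h : (ω.pullback f f.continuous).CatFormLE k) :
    ω.CatFormLE k := by
  obtain ⟨C, hC⟩ := exists_nMovable_preimage F ω
  exact h.of_transfer (g ⁻¹' ·) C (fun _ hB => hB.preimage g.continuous) hC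
    fun _ hB => hB.preimage F

end Transfer

end CatForm

end ClosedOneForm

theorem catForm_homotopy_invariant_general
    (X Y : Type) [TopologicalSpace X] [TopologicalSpace Y]
    [CompactSpace X] [CompactSpace Y]
    (f : C(Y, X))
    (hf : ∃ g : C(X, Y), (f.comp g).Homotopic (ContinuousMap.id X) ∧
      (g.comp f).Homotopic (ContinuousMap.id Y))
    (ω : ClosedOneForm X) :
    ω.catForm = (ω.pullback f f.continuous).catForm := by
  obtain ⟨g, ⟨F⟩, ⟨G⟩⟩ := hf
  have hk : ∀ k, ω.CatFormLE k ↔ (ω.pullback f f.continuous).CatFormLE k := fun k =>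
    ⟨fun h => (h.pullback_of_homotopy F).of_pullback G, fun h => h.of_pullback F⟩
  simp only [ClosedOneForm.catForm_eq_sInf, hk]

/-- **Homotopy invariance of `cat(X, ξ)`.**  Let `X`, `Y` be finite connected
CW complexes, `f : Y → X` a homotopy equivalence and `ω` a continuous closed
1-form on `X`.  Then `cat(X, ω) = cat(Y, f*ω)`. -/
theorem catForm_homotopy_invariant
    (X Y : Type) [TopologicalSpace X] [TopologicalSpace Y]
    [T2Space X] [T2Space Y] [CompactSpace X] [CompactSpace Y]
    [ConnectedSpace X] [ConnectedSpace Y]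
    (cX : FinCW X) (cY : FinCW Y)
    (f : C(Y, X))
    (hf : ∃ g : C(X, Y), (f.comp g).Homotopic (ContinuousMap.id X) ∧
      (g.comp f).Homotopic (ContinuousMap.id Y))
    (ω : ClosedOneForm X) :
    ω.catForm = (ω.pullback f f.continuous).catForm :=
  catForm_homotopy_invariant_general X Y f hf ω
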